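/- arXiv:1504.00427 — 2 statements merged into one kernel-verified Lean document; each statement's English description precedes it below -/
import Mathlib

section
/- Let (V,d,b) be an information network, T ≥ 1, and v* a non-void node such that the set function A ↦ (1/T) ∑_{t=1}^T E[X^t_{v*}(A,∅)] on subsets of V\{d} is not submodular. Consider the information network (V',d,b') obtained by adding a finite set L of new nodes, each having a single outgoing edge of weight 1 to v* (all other weights unchanged). Then for all sufficiently large |L|, the expected influence σ̄' of the new network over the period [1,T+1], as a set function of the transient initial set (with empty permanent set), is not submodular; moreover the failure of submodularity is witnessed by subsets of V\{d}. -/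
open MeasureTheory

/-- An information network: a finite node set `V` with a distinguished void node `d`
and a row-stochastic weight matrix `b` with entries in `[0,1]` and `b d d = 1`. -/
structure InfoNetwork (V : Type*) [Fintype V] where
  d : V
  b : V → V → ℝ
  b_nonneg : ∀ v u, 0 ≤ b v u
  b_le_one : ∀ v u, b v u ≤ 1
  row_sum : ∀ v, ∑ u, b v u = 1
  void_loop : b d d = 1

/-- The uniform probability measure on the interval `(0,1)`. -/
noncomputable def unifMeasure : Measure ℝ := volume.restrict (Set.Ioo (0:ℝ) 1)

/-- Product over `V` of uniform measures on `(0,1)`: the distribution of the thresholds. -/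
noncomputable def thresholdMeasure (V : Type*) [Fintype V] : Measure (V → ℝ) :=
  Measure.pi fun _ : V => unifMeasure

namespace InfoNetwork

variable {V : Type*} [Fintype V]

/-- The set of active nodes at time `t` under the non-progressive linear threshold model,
with transient initial set `A`, permanent initial set `Ahat` and thresholds `θ`. -/
noncomputable def activeSet (N : InfoNetwork V) (A Ahat : Set V) (θ : V → ℝ) : ℕ → Set V
  | 0 => A ∪ Ahat
  | t+1 => Ahat ∪
      {v | v ∉ Ahat ∧ θ v ≤ ∑ u, (N.activeSet A Ahat θ t).indicator (N.b v) u}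

/-- `E[X^t_v(A,Ahat)]`: the probability (over the random thresholds) that `v` is active
at time `t`. -/
noncomputable def EX (N : InfoNetwork V) (A Ahat : Set V) (t : ℕ) (v : V) : ℝ :=
  (thresholdMeasure V {θ | v ∈ N.activeSet A Ahat θ t}).toReal

/-- The expected influence over the period `[1,T]`. -/
noncomputable def sigmaBar (N : InfoNetwork V) (T : ℕ) (A Ahat : Set V) : ℝ :=
  (1 / (T : ℝ)) * ∑ t ∈ Finset.Icc 1 T, ∑ v, N.EX A Ahat t v

/-- The edge relation of the directed graph on `V \ {d}`. -/
def edgeRel (N : InfoNetwork V) (v u : V) : Prop :=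
  v ≠ N.d ∧ u ≠ N.d ∧ 0 < N.b v u

/-- The network is acyclic if the directed graph on `V \ {d}` has no directed cycle. -/
def Acyclic (N : InfoNetwork V) : Prop :=
  ∀ v, ¬ Relation.TransGen N.edgeRel v v

end InfoNetwork

/-- A real-valued set function `f` is submodular on the ground set `S`. -/
def SubmodularOn {V : Type*} (S : Set V) (f : Set V → ℝ) : Prop :=
  ∀ A B : Set V, A ⊆ B → B ⊆ S → ∀ w ∈ S, w ∉ B →
    f (insert w B) - f B ≤ f (insert w A) - f A

/-- The information network obtained from `N` by adding `n` new nodes, each having a single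
outgoing edge of weight `1` to `vstar` (all other weights unchanged). -/
noncomputable def extendNet {V : Type*} [Fintype V] [DecidableEq V] (N : InfoNetwork V)
    (vstar : V) (n : ℕ) : InfoNetwork (V ⊕ Fin n) where
  d := Sum.inl N.d
  b x y :=
    match x, y with
    | Sum.inl v, Sum.inl u => N.b v u
    | Sum.inl _, Sum.inr _ => 0
    | Sum.inr _, Sum.inl u => if u = vstar then 1 else 0
    | Sum.inr _, Sum.inr _ => 0
  b_nonneg := by
    rintro (v | l) (u | m)
    · exact N.b_nonneg _ _
    · exact le_refl 0
    · dsimp only; split_ifs <;> norm_num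
    · exact le_refl 0
  b_le_one := by
    rintro (v | l) (u | m)
    · exact N.b_le_one _ _
    · norm_num
    · dsimp only; split_ifs <;> norm_num
    · norm_num
  row_sum := by
    rintro (v | l)
    · rw [Fintype.sum_sum_type]
      simpa using N.row_sum v
    · rw [Fintype.sum_sum_type]
      simp
  void_loop := N.void_loop

/-!
A new leaf has `v*` as its only in-neighbour and a threshold that lies in `(0,1)` almost surely,
so it is active at time `t + 1` exactly when `v*` is active at time `t`; the leaves do not feed
back into `V`. Hence the influence of the extended network over `[1, T + 1]` is
`σ̄_N(X) + n · (T + 1)⁻¹ ∑_{t=0}^{T} E[X^t_{v*}(X)]`, affine in `n`. The `t = 0` term is an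
indicator, hence modular, so the slope violates submodularity by a positive multiple of the
violation assumed for `v*`, and this dominates the fixed intercept once `n` is large.
-/

open Filter Finset

lemma Finset.sum_Icc_one_eq_sum_range {M : Type*} [AddCommMonoid M] (f : ℕ → M) (T : ℕ) :
    ∑ t ∈ Icc 1 T, f t = ∑ t ∈ range T, f (t + 1) := by
  rw [range_eq_Ico, sum_Ico_add', zero_add, Ico_add_one_right_eq_Icc]

lemma le_indicator_one_iff {α : Type*} {s : Set α} {x : α} {a : ℝ} (ha : a ∈ Set.Ioo 0 1) :
    a ≤ s.indicator 1 x ↔ x ∈ s := by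
  by_cases hx : x ∈ s <;> simp [hx, ha.1, ha.2.le]

instance : IsProbabilityMeasure unifMeasure :=
  ⟨by simp [unifMeasure, Real.volume_Ioo]⟩

instance (V : Type*) [Fintype V] : IsProbabilityMeasure (thresholdMeasure V) := by
  unfold thresholdMeasure; infer_instance

lemma ae_thresholdMeasure_mem_Ioo {V : Type*} [Fintype V] (j : V) :
    ∀ᵐ θ ∂thresholdMeasure V, θ j ∈ Set.Ioo (0 : ℝ) 1 :=
  Measure.tendsto_eval_ae_ae.eventually (ae_restrict_mem measurableSet_Ioo)

lemma measurePreserving_comp_inl (V W : Type*) [Fintype V] [Fintype W] :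
    MeasurePreserving (fun θ : V ⊕ W → ℝ => θ ∘ Sum.inl)
      (thresholdMeasure (V ⊕ W)) (thresholdMeasure V) :=
  measurePreserving_fst.comp (measurePreserving_sumPiEquivProdPi _)

namespace InfoNetwork

variable {V : Type*} [Fintype V] (N : InfoNetwork V)

lemma measurableSet_mem_activeSet (A Ahat : Set V) (t : ℕ) (v : V) :
    MeasurableSet {θ : V → ℝ | v ∈ N.activeSet A Ahat θ t} := by
  classical
  induction t generalizing v with
  | zero => exact MeasurableSet.const _
  | succ t ih =>
    simp only [activeSet, Set.mem_union, Set.ofPred_or, Set.ofPred_and]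
    refine (MeasurableSet.const _).union ((MeasurableSet.const _).inter
      (measurableSet_le (measurable_pi_apply v) (Finset.measurable_sum _ fun u _ => ?_)))
    simp only [Set.indicator_apply]
    exact Measurable.ite (ih u) measurable_const measurable_const

lemma EX_zero (A Ahat : Set V) (v : V) : N.EX A Ahat 0 v = (A ∪ Ahat).indicator 1 v := by
  by_cases hv : v ∈ A ∪ Ahat <;> simp [EX, activeSet, hv]

lemma sum_range_succ_EX (T : ℕ) (A Ahat : Set V) (v : V) :
    ∑ t ∈ range (T + 1), N.EX A Ahat t v =
      ∑ t ∈ Icc 1 T, N.EX A Ahat t v + (A ∪ Ahat).indicator 1 v := by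
  rw [sum_range_succ', sum_Icc_one_eq_sum_range, EX_zero]

lemma sigmaBar_eq_sum_range (T : ℕ) (A Ahat : Set V) :
    N.sigmaBar T A Ahat = (T : ℝ)⁻¹ * ∑ t ∈ range T, ∑ v, N.EX A Ahat (t + 1) v := by
  rw [sigmaBar, one_div, sum_Icc_one_eq_sum_range]

end InfoNetwork

section ExtendNet

open InfoNetwork

variable {V : Type*} [Fintype V] [DecidableEq V] (N : InfoNetwork V) (vstar : V) (n : ℕ)

@[simp] lemma extendNet_b_inl_inl (v u : V) :
    (extendNet N vstar n).b (Sum.inl v) (Sum.inl u) = N.b v u := rfl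

@[simp] lemma extendNet_b_inl_inr (v : V) (m : Fin n) :
    (extendNet N vstar n).b (Sum.inl v) (Sum.inr m) = 0 := rfl

@[simp] lemma extendNet_b_inr_inl (m : Fin n) (u : V) :
    (extendNet N vstar n).b (Sum.inr m) (Sum.inl u) = if u = vstar then 1 else 0 := rfl

@[simp] lemma extendNet_b_inr_inr (m m' : Fin n) :
    (extendNet N vstar n).b (Sum.inr m) (Sum.inr m') = 0 := rfl

lemma sum_indicator_extendNet_b_inl (S : Set (V ⊕ Fin n)) (v : V) :
    ∑ x, S.indicator ((extendNet N vstar n).b (Sum.inl v)) x =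
      ∑ u, (Sum.inl ⁻¹' S).indicator (N.b v) u := by
  classical
  simp [Fintype.sum_sum_type, Set.indicator_apply]

lemma sum_indicator_extendNet_b_inr (S : Set (V ⊕ Fin n)) (m : Fin n) :
    ∑ x, S.indicator ((extendNet N vstar n).b (Sum.inr m)) x =
      (Sum.inl ⁻¹' S).indicator 1 vstar := by
  classical
  rw [Fintype.sum_sum_type, Finset.sum_eq_single vstar
    (fun u _ hu => by simp [Set.indicator_apply, hu]) (by simp)]
  simp [Set.indicator_apply]

lemma preimage_inl_activeSet_extendNet (A Ahat : Set V) (θ : V ⊕ Fin n → ℝ) (t : ℕ) :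
    Sum.inl ⁻¹' (extendNet N vstar n).activeSet (Sum.inl '' A) (Sum.inl '' Ahat) θ t =
      N.activeSet A Ahat (θ ∘ Sum.inl) t := by
  induction t with
  | zero => simp [activeSet, Set.preimage_image_eq _ Sum.inl_injective]
  | succ t ih =>
    ext v
    simp only [activeSet, Set.mem_preimage, Set.mem_union, Set.mem_ofPred_eq,
      sum_indicator_extendNet_b_inl, ih, Sum.inl_injective.mem_set_image, Function.comp_apply]

lemma mem_activeSet_extendNet_inr (A Ahat : Set V) (θ : V ⊕ Fin n → ℝ) (t : ℕ) (m : Fin n) :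
    Sum.inr m ∈ (extendNet N vstar n).activeSet (Sum.inl '' A) (Sum.inl '' Ahat) θ (t + 1) ↔
      θ (Sum.inr m) ≤ (N.activeSet A Ahat (θ ∘ Sum.inl) t).indicator 1 vstar := by
  simp only [activeSet, Set.mem_union, Set.mem_ofPred_eq, sum_indicator_extendNet_b_inr,
    preimage_inl_activeSet_extendNet]
  simp

lemma EX_extendNet_inl (A Ahat : Set V) (t : ℕ) (v : V) :
    (extendNet N vstar n).EX (Sum.inl '' A) (Sum.inl '' Ahat) t (Sum.inl v) =
      N.EX A Ahat t v := by
  rw [EX, EX, ← (measurePreserving_comp_inl V (Fin n)).measure_preimage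
    (N.measurableSet_mem_activeSet A Ahat t v).nullMeasurableSet]
  congr 2
  ext θ
  exact Set.ext_iff.mp (preimage_inl_activeSet_extendNet N vstar n A Ahat θ t) v

lemma EX_extendNet_inr (A Ahat : Set V) (t : ℕ) (m : Fin n) :
    (extendNet N vstar n).EX (Sum.inl '' A) (Sum.inl '' Ahat) (t + 1) (Sum.inr m) =
      N.EX A Ahat t vstar := by
  rw [EX, EX, ← (measurePreserving_comp_inl V (Fin n)).measure_preimage
    (N.measurableSet_mem_activeSet A Ahat t vstar).nullMeasurableSet]
  congr 1
  refine measure_congr ?_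
  filter_upwards [ae_thresholdMeasure_mem_Ioo (Sum.inr m)] with θ hθ
  exact propext <| (mem_activeSet_extendNet_inr N vstar n A Ahat θ t m).trans
    (le_indicator_one_iff hθ)

lemma sigmaBar_extendNet (T : ℕ) (A Ahat : Set V) :
    (extendNet N vstar n).sigmaBar T (Sum.inl '' A) (Sum.inl '' Ahat) =
      N.sigmaBar T A Ahat + n * ((T : ℝ)⁻¹ * ∑ t ∈ range T, N.EX A Ahat t vstar) := by
  simp only [sigmaBar_eq_sum_range, Fintype.sum_sum_type, EX_extendNet_inl, EX_extendNet_inr,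
    sum_const, card_univ, Fintype.card_fin, nsmul_eq_mul, sum_add_distrib, ← mul_sum]
  ring

end ExtendNet

section MarginalExcess

variable {V : Type*}

def marginalExcess (f : Set V → ℝ) (A B : Set V) (w : V) : ℝ :=
  (f (insert w B) - f B) - (f (insert w A) - f A)

lemma not_submodularOn_iff (S : Set V) (f : Set V → ℝ) :
    ¬ SubmodularOn S f ↔
      ∃ A B w, A ⊆ B ∧ B ⊆ S ∧ w ∈ S ∧ w ∉ B ∧ 0 < marginalExcess f A B w := by
  simp only [SubmodularOn, marginalExcess, sub_pos]
  grind

lemma marginalExcess_add (f g : Set V → ℝ) (A B : Set V) (w : V) :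
    marginalExcess (fun X => f X + g X) A B w =
      marginalExcess f A B w + marginalExcess g A B w := by
  simp only [marginalExcess]
  ring

lemma marginalExcess_const_mul (g : Set V → ℝ) (c : ℝ) (A B : Set V) (w : V) :
    marginalExcess (fun X => c * g X) A B w = c * marginalExcess g A B w := by
  simp only [marginalExcess]
  ring

lemma marginalExcess_indicator_one {A B : Set V} {w : V} (hAB : A ⊆ B) (hwB : w ∉ B) (v : V) :
    marginalExcess (fun X => X.indicator 1 v) A B w = 0 := by
  classical
  by_cases hv : v = w
  · subst hv
    have hwA : v ∉ A := fun h => hwB (hAB h)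
    simp [marginalExcess, hwB, hwA]
  · simp [marginalExcess, Set.indicator_apply, hv]

lemma eventually_marginalExcess_add_nat_mul_pos (f g : Set V → ℝ) {A B : Set V} {w : V}
    (hg : 0 < marginalExcess g A B w) :
    ∀ᶠ n : ℕ in atTop, 0 < marginalExcess (fun X => f X + n * g X) A B w := by
  simp only [marginalExcess_add, marginalExcess_const_mul]
  exact (tendsto_atTop_add_const_left _ _
    (tendsto_natCast_atTop_atTop.atTop_mul_const hg)).eventually_gt_atTop 0

end MarginalExcess

theorem extendNet_influence_not_submodular_general {V : Type*} [Fintype V] [DecidableEq V]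
    (N : InfoNetwork V) (T : ℕ) (vstar : V)
    (hns : ¬ SubmodularOn {x : V | x ≠ N.d}
      (fun A => (1 / (T : ℝ)) * ∑ t ∈ Finset.Icc 1 T, N.EX A ∅ t vstar)) :
    ∃ n₀ : ℕ, ∀ n : ℕ, n₀ ≤ n →
      ∃ (A B : Set V) (w : V), A ⊆ B ∧ B ⊆ {x : V | x ≠ N.d} ∧ w ≠ N.d ∧ w ∉ B ∧
        (extendNet N vstar n).sigmaBar (T + 1) (Sum.inl '' (insert w B)) ∅ -
            (extendNet N vstar n).sigmaBar (T + 1) (Sum.inl '' B) ∅ >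
          (extendNet N vstar n).sigmaBar (T + 1) (Sum.inl '' (insert w A)) ∅ -
            (extendNet N vstar n).sigmaBar (T + 1) (Sum.inl '' A) ∅ := by
  obtain ⟨A, B, w, hAB, hBS, hwS, hwB, hexcess⟩ := (not_submodularOn_iff _ _).mp hns
  have hf : 0 < marginalExcess (fun X => ∑ t ∈ Icc 1 T, N.EX X ∅ t vstar) A B w := by
    rw [marginalExcess_const_mul] at hexcess
    exact pos_of_mul_pos_right hexcess (by positivity)
  have hleaf : 0 < marginalExcess
      (fun X => ((T + 1 : ℕ) : ℝ)⁻¹ * ∑ t ∈ range (T + 1), N.EX X ∅ t vstar) A B w := by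
    simp only [marginalExcess_const_mul, N.sum_range_succ_EX, Set.union_empty,
      marginalExcess_add, marginalExcess_indicator_one hAB hwB, add_zero]
    exact mul_pos (by positivity) hf
  obtain ⟨n₀, hn₀⟩ := eventually_atTop.mp
    (eventually_marginalExcess_add_nat_mul_pos (fun X => N.sigmaBar (T + 1) X ∅) _ hleaf)
  refine ⟨n₀, fun n hn => ⟨A, B, w, hAB, hBS, hwS, hwB, ?_⟩⟩
  rw [← Set.image_empty (Sum.inl : V → V ⊕ Fin n)]
  simpa only [sigmaBar_extendNet, marginalExcess, sub_pos] using hn₀ n hn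

/-- if `A ↦ (1/T) ∑_{t=1}^T E[X^t_{v*}(A,∅)]` is not submodular on subsets of
`V \ {d}`, then for every sufficiently large number `n` of added nodes, the expected
influence of the extended network over the period `[1,T+1]` (with empty permanent set) is
not submodular; the failure of submodularity is witnessed by subsets of `V \ {d}`. -/
theorem extendNet_influence_not_submodular {V : Type*} [Fintype V] [DecidableEq V]
    (N : InfoNetwork V) (T : ℕ) (hT : 1 ≤ T) (vstar : V) (hv : vstar ≠ N.d)
    (hns : ¬ SubmodularOn {x : V | x ≠ N.d}
      (fun A => (1 / (T : ℝ)) * ∑ t ∈ Finset.Icc 1 T, N.EX A ∅ t vstar)) :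
    ∃ n₀ : ℕ, ∀ n : ℕ, n₀ ≤ n →
      ∃ (A B : Set V) (w : V), A ⊆ B ∧ B ⊆ {x : V | x ≠ N.d} ∧ w ≠ N.d ∧ w ∉ B ∧
        (extendNet N vstar n).sigmaBar (T + 1) (Sum.inl '' (insert w B)) ∅ -
            (extendNet N vstar n).sigmaBar (T + 1) (Sum.inl '' B) ∅ >
          (extendNet N vstar n).sigmaBar (T + 1) (Sum.inl '' (insert w A)) ∅ -
            (extendNet N vstar n).sigmaBar (T + 1) (Sum.inl '' A) ∅ :=
  extendNet_influence_not_submodular_general N T vstar hns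
end

section
/- There exist an information network (V,d,b) in which the only directed cycle of the directed graph on V\{d} (with an edge from v to u whenever b v u > 0) is a self-loop at a single non-void node, and a time horizon T ≥ 1, such that the expected influence A ↦ σ̄(A,∅) over the period [1,T], as a set function on subsets of V\{d}, is not submodular. -/
open MeasureTheory

/-!
Take the void node `0` and rows `b 1 = (0, 1/2, 1/4, 1/4, 0)`, `b 2 = δ₄`, `b 3 = b 4 = δ₀`; the
only cycle off the void node is the self-loop at `1`. Almost surely every threshold lies in
`(0, 1)`, so a node whose row is a point mass copies that node one step later, and the void node
is never active. For a seed set `S ∋ 1` avoiding `0`, with `c = ∑_{u ∈ S} b 1 u` and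
`f = [4 ∈ S]`, node `1` is active at time 1 iff `θ₁ ≤ c` and node `2` iff `f = 1`, so at time 2
only node `1` can be active, namely iff `θ₁ ≤ min c (1/2 + f/4)`. With `T = 2` this gives
`σ̄(S) = (c + f + min c (1/2 + f/4)) / 2`: adding `4` to `{1}` gains `1/2`, but adding it to
`{1, 3}` gains `5/8`, because the self-loop keeps node `1` from using the extra input `f/4`
unless `3` has already raised `c` above `1/2`.
-/

open Set

lemma le_ite_add_iff_le_min {x c a e : ℝ} (hec : e < c) :
    x ≤ (if x ≤ c then a else 0) + e ↔ x ≤ min c (a + e) := by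
  rw [le_min_iff]
  split_ifs with hxc
  · exact ⟨fun h => ⟨hxc, h⟩, And.right⟩
  · constructor
    · intro h; linarith
    · exact fun h => absurd h.1 hxc

instance inst_s3 : IsProbabilityMeasure unifMeasure :=
  ⟨by simp [unifMeasure, Real.volume_Ioo]⟩

lemma unifMeasure_Iic {c : ℝ} (hc : c ≤ 1) : unifMeasure (Iic c) = ENNReal.ofReal c := by
  rw [unifMeasure, Measure.restrict_apply measurableSet_Iic]
  refine le_antisymm ?_ ?_
  · calc volume (Iic c ∩ Ioo 0 1) ≤ volume (Icc 0 c) :=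
          measure_mono fun x hx => ⟨hx.2.1.le, hx.1⟩
      _ = ENNReal.ofReal c := by simp [Real.volume_Icc]
  · calc ENNReal.ofReal c = volume (Ioo 0 c) := by simp [Real.volume_Ioo]
      _ ≤ volume (Iic c ∩ Ioo 0 1) :=
          measure_mono fun x hx => ⟨hx.2.le, hx.1, hx.2.trans_le hc⟩

section Thresholds

variable {V : Type*} [Fintype V]

lemma ae_thresholdMeasure_mem_Ioo_s3 : ∀ᵐ θ ∂thresholdMeasure V, ∀ v, θ v ∈ Ioo 0 1 :=
  Filter.eventually_all.2 fun v =>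
    (measurePreserving_eval _ v).quasiMeasurePreserving.ae (ae_restrict_mem measurableSet_Ioo)

lemma thresholdMeasure_setOf_apply_le {c : ℝ} (hc : c ≤ 1) (v : V) :
    thresholdMeasure V {θ | θ v ≤ c} = ENNReal.ofReal c := by
  rw [← unifMeasure_Iic hc]
  exact (measurePreserving_eval (fun _ : V => unifMeasure) v).measure_preimage
    measurableSet_Iic.nullMeasurableSet

end Thresholds

namespace InfoNetwork

variable {V : Type*} [Fintype V] (N : InfoNetwork V)

noncomputable def weightFrom (S : Set V) (v : V) : ℝ := ∑ u, S.indicator (N.b v) u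

lemma weightFrom_nonneg (S : Set V) (v : V) : 0 ≤ N.weightFrom S v :=
  Finset.sum_nonneg fun u _ => indicator_nonneg (fun u _ => N.b_nonneg v u) u

lemma weightFrom_le_one (S : Set V) (v : V) : N.weightFrom S v ≤ 1 :=
  (Finset.sum_le_sum fun u _ => indicator_le_self' (fun u _ => N.b_nonneg v u) u).trans_eq
    (N.row_sum v)

lemma weightFrom_of_row_eq_single [DecidableEq V] {v u : V} (h : N.b v = Pi.single u 1)
    (S : Set V) : N.weightFrom S v = S.indicator 1 u := by
  rw [weightFrom, h, Finset.sum_eq_single u (fun x _ hx => by simp [hx]) (by simp)]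
  by_cases hu : u ∈ S <;> simp [hu]

lemma mem_activeSet_succ_iff {A : Set V} {θ : V → ℝ} {t : ℕ} {v : V} :
    v ∈ N.activeSet A ∅ θ (t + 1) ↔ θ v ≤ N.weightFrom (N.activeSet A ∅ θ t) v := by
  simp [activeSet, weightFrom]

lemma mem_activeSet_one_iff {A : Set V} {θ : V → ℝ} {v : V} :
    v ∈ N.activeSet A ∅ θ 1 ↔ θ v ≤ N.weightFrom A v := by
  rw [mem_activeSet_succ_iff, activeSet, union_empty]

lemma mem_activeSet_succ_iff_of_row_eq_single [DecidableEq V] {A : Set V} {θ : V → ℝ} {t : ℕ}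
    {v u : V} (h : N.b v = Pi.single u 1) (hθ : θ v ∈ Ioo 0 1) :
    v ∈ N.activeSet A ∅ θ (t + 1) ↔ u ∈ N.activeSet A ∅ θ t := by
  rw [mem_activeSet_succ_iff, N.weightFrom_of_row_eq_single h]
  by_cases hu : u ∈ N.activeSet A ∅ θ t
  · exact iff_of_true (by simpa [hu] using hθ.2.le) hu
  · exact iff_of_false (by simpa [hu] using hθ.1) hu

lemma b_void_eq_single [DecidableEq V] : N.b N.d = Pi.single N.d 1 := by
  have hrest : ∑ u ∈ Finset.univ.erase N.d, N.b N.d u = 0 := by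
    linarith [Finset.add_sum_erase Finset.univ (N.b N.d) (Finset.mem_univ N.d), N.row_sum N.d,
      N.void_loop]
  funext u
  by_cases hu : u = N.d
  · simp [hu, N.void_loop]
  · simpa [hu] using (Finset.sum_eq_zero_iff_of_nonneg fun x _ => N.b_nonneg N.d x).1 hrest u
      (Finset.mem_erase.2 ⟨hu, Finset.mem_univ u⟩)

lemma void_notMem_activeSet [DecidableEq V] {A : Set V} {θ : V → ℝ} (hA : N.d ∉ A)
    (hθ : θ N.d ∈ Ioo 0 1) (t : ℕ) : N.d ∉ N.activeSet A ∅ θ t := by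
  induction t with
  | zero => simpa [activeSet] using hA
  | succ t ih => rwa [N.mem_activeSet_succ_iff_of_row_eq_single N.b_void_eq_single hθ]

lemma EX_eq_of_forall_mem_iff {A Ahat : Set V} {t : ℕ} {v : V} {r : ℝ} (hr₀ : 0 ≤ r)
    (hr₁ : r ≤ 1)
    (h : ∀ θ : V → ℝ, (∀ u, θ u ∈ Ioo 0 1) → (v ∈ N.activeSet A Ahat θ t ↔ θ v ≤ r)) :
    N.EX A Ahat t v = r := by
  have hae : {θ | v ∈ N.activeSet A Ahat θ t} =ᵐ[thresholdMeasure V] {θ | θ v ≤ r} :=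
    Filter.eventuallyEq_set.2 (ae_thresholdMeasure_mem_Ioo_s3.mono h)
  rw [EX, measure_congr hae, thresholdMeasure_setOf_apply_le hr₁, ENNReal.toReal_ofReal hr₀]

lemma EX_eq_zero_of_forall_notMem {A Ahat : Set V} {t : ℕ} {v : V}
    (h : ∀ θ : V → ℝ, (∀ u, θ u ∈ Ioo 0 1) → v ∉ N.activeSet A Ahat θ t) :
    N.EX A Ahat t v = 0 :=
  N.EX_eq_of_forall_mem_iff le_rfl zero_le_one fun θ hθ =>
    iff_of_false (h θ hθ) (not_le.2 (hθ v).1)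

lemma EX_one_empty (A : Set V) (v : V) : N.EX A ∅ 1 v = N.weightFrom A v :=
  N.EX_eq_of_forall_mem_iff (N.weightFrom_nonneg A v) (N.weightFrom_le_one A v) fun _ _ =>
    N.mem_activeSet_one_iff

lemma sigmaBar_two (A Ahat : Set V) :
    N.sigmaBar 2 A Ahat = (∑ v, N.EX A Ahat 1 v + ∑ v, N.EX A Ahat 2 v) / 2 := by
  rw [sigmaBar, show Finset.Icc 1 2 = {1, 2} by decide, Finset.sum_pair (by decide)]
  ring

end InfoNetwork

noncomputable def selfLoopNetwork : InfoNetwork (Fin 5) where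
  d := 0
  b := ![Pi.single 0 1, ![0, 1/2, 1/4, 1/4, 0], Pi.single 4 1, Pi.single 0 1, Pi.single 0 1]
  b_nonneg := by intro v u; fin_cases v <;> fin_cases u <;> simp [Fin.ext_iff]
  b_le_one := by
    intro v u; fin_cases v <;> fin_cases u <;> norm_num [Pi.single_apply, Fin.ext_iff]
  row_sum := by
    intro v; fin_cases v <;> norm_num [Fin.sum_univ_five, Matrix.cons_val_two,
      Matrix.cons_val_three, Matrix.cons_val_four]
  void_loop := by norm_num

namespace selfLoopNetwork

variable {S : Set (Fin 5)} {θ : Fin 5 → ℝ}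

lemma weightFrom_one (S : Set (Fin 5)) :
    selfLoopNetwork.weightFrom S 1 = S.indicator (fun _ => 1/2) 1 + S.indicator (fun _ => 1/4) 2
      + S.indicator (fun _ => 1/4) 3 := by
  classical
  simp [InfoNetwork.weightFrom, selfLoopNetwork, Fin.sum_univ_five, indicator_apply]

lemma weightFrom_two (S : Set (Fin 5)) : selfLoopNetwork.weightFrom S 2 = S.indicator 1 4 :=
  selfLoopNetwork.weightFrom_of_row_eq_single rfl S

lemma half_le_weightFrom_one (h1 : 1 ∈ S) :
    1/2 ≤ selfLoopNetwork.weightFrom S 1 := by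
  rw [weightFrom_one, indicator_of_mem h1]
  have h2 := indicator_nonneg (s := S) (fun _ _ => (by norm_num : (0:ℝ) ≤ 1/4)) 2
  have h3 := indicator_nonneg (s := S) (fun _ _ => (by norm_num : (0:ℝ) ≤ 1/4)) 3
  linarith


lemma notMem_activeSet_of_row_eq_void (hS : 0 ∉ S) (hθ : ∀ u, θ u ∈ Ioo 0 1) {v : Fin 5}
    (hv : selfLoopNetwork.b v = Pi.single 0 1) (t : ℕ) :
    v ∉ selfLoopNetwork.activeSet S ∅ θ (t + 1) := by
  rw [selfLoopNetwork.mem_activeSet_succ_iff_of_row_eq_single hv (hθ v)]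
  exact selfLoopNetwork.void_notMem_activeSet hS (hθ 0) t

lemma two_mem_activeSet_one_iff (hθ : ∀ u, θ u ∈ Ioo 0 1) :
    2 ∈ selfLoopNetwork.activeSet S ∅ θ 1 ↔ 4 ∈ S := by
  rw [selfLoopNetwork.mem_activeSet_succ_iff_of_row_eq_single rfl (hθ 2), InfoNetwork.activeSet,
    union_empty]

lemma one_mem_activeSet_two_iff (hS : 0 ∉ S) (h1 : 1 ∈ S) (hθ : ∀ u, θ u ∈ Ioo 0 1) :
    1 ∈ selfLoopNetwork.activeSet S ∅ θ 2 ↔ θ 1 ≤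
      min (selfLoopNetwork.weightFrom S 1) (1/2 + selfLoopNetwork.weightFrom S 2 / 4) := by
  set c := selfLoopNetwork.weightFrom S 1
  have hself : (selfLoopNetwork.activeSet S ∅ θ 1).indicator (fun _ => (1/2 : ℝ)) 1 =
      if θ 1 ≤ c then 1/2 else 0 := by
    by_cases h : θ 1 ≤ c <;> simp [h, c, InfoNetwork.mem_activeSet_one_iff]
  have htwo : (selfLoopNetwork.activeSet S ∅ θ 1).indicator (fun _ => 1/4) 2 =
      selfLoopNetwork.weightFrom S 2 / 4 := by
    by_cases h4 : 4 ∈ S <;> simp [h4, weightFrom_two, two_mem_activeSet_one_iff hθ]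
  have hthree : (selfLoopNetwork.activeSet S ∅ θ 1).indicator (fun _ => (1/4 : ℝ)) 3 = 0 :=
    indicator_of_notMem (notMem_activeSet_of_row_eq_void hS hθ rfl 0) _
  rw [InfoNetwork.mem_activeSet_succ_iff, weightFrom_one, hself, htwo, hthree, add_zero]
  exact le_ite_add_iff_le_min (by
    linarith [half_le_weightFrom_one h1, selfLoopNetwork.weightFrom_le_one S 2])


lemma sum_EX_one (hS : 0 ∉ S) :
    ∑ v, selfLoopNetwork.EX S ∅ 1 v =
      selfLoopNetwork.weightFrom S 1 + selfLoopNetwork.weightFrom S 2 := by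
  have hvoid : ∀ v, selfLoopNetwork.b v = Pi.single 0 1 → selfLoopNetwork.weightFrom S v = 0 :=
    fun v hv => by rw [selfLoopNetwork.weightFrom_of_row_eq_single hv, indicator_of_notMem hS]
  simp only [InfoNetwork.EX_one_empty, Fin.sum_univ_five, hvoid 0 rfl, hvoid 3 rfl, hvoid 4 rfl]
  ring

lemma sum_EX_two (hS : 0 ∉ S) (h1 : 1 ∈ S) :
    ∑ v, selfLoopNetwork.EX S ∅ 2 v =
      min (selfLoopNetwork.weightFrom S 1) (1/2 + selfLoopNetwork.weightFrom S 2 / 4) := by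
  have hvoid : ∀ v, selfLoopNetwork.b v = Pi.single 0 1 → selfLoopNetwork.EX S ∅ 2 v = 0 :=
    fun v hv => selfLoopNetwork.EX_eq_zero_of_forall_notMem fun θ hθ =>
      notMem_activeSet_of_row_eq_void hS hθ hv 1
  have hzero : selfLoopNetwork.EX S ∅ 2 0 = 0 :=
    selfLoopNetwork.EX_eq_zero_of_forall_notMem fun θ hθ =>
      selfLoopNetwork.void_notMem_activeSet hS (hθ 0) 2
  have htwo : selfLoopNetwork.EX S ∅ 2 2 = 0 :=
    selfLoopNetwork.EX_eq_zero_of_forall_notMem fun θ hθ => by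
      rw [selfLoopNetwork.mem_activeSet_succ_iff_of_row_eq_single rfl (hθ 2)]
      exact notMem_activeSet_of_row_eq_void hS hθ rfl 0
  have hone := selfLoopNetwork.EX_eq_of_forall_mem_iff
    (le_min (selfLoopNetwork.weightFrom_nonneg S 1)
      (by linarith [selfLoopNetwork.weightFrom_nonneg S 2]))
    ((min_le_left _ _).trans (selfLoopNetwork.weightFrom_le_one S 1))
    fun θ hθ => one_mem_activeSet_two_iff hS h1 hθ
  rw [Fin.sum_univ_five, hzero, hone, htwo, hvoid 3 rfl, hvoid 4 rfl]
  ring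

lemma sigmaBar_two_eq (hS : 0 ∉ S) (h1 : 1 ∈ S) :
    selfLoopNetwork.sigmaBar 2 S ∅ =
      (selfLoopNetwork.weightFrom S 1 + selfLoopNetwork.weightFrom S 2 +
        min (selfLoopNetwork.weightFrom S 1) (1/2 + selfLoopNetwork.weightFrom S 2 / 4)) / 2 := by
  rw [InfoNetwork.sigmaBar_two, sum_EX_one hS, sum_EX_two hS h1]

lemma sigmaBar_gain_lt :
    selfLoopNetwork.sigmaBar 2 (insert 4 {1}) ∅ - selfLoopNetwork.sigmaBar 2 {1} ∅ <
      selfLoopNetwork.sigmaBar 2 (insert 4 {1, 3}) ∅ - selfLoopNetwork.sigmaBar 2 {1, 3} ∅ := by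
  rw [sigmaBar_two_eq (by simp) (by simp), sigmaBar_two_eq (by simp) (by simp),
    sigmaBar_two_eq (by simp) (by simp), sigmaBar_two_eq (by simp) (by simp)]
  simp [weightFrom_one, weightFrom_two]
  norm_num

lemma edgeRel_cases {v u : Fin 5} (h : selfLoopNetwork.edgeRel v u) :
    v = 1 ∨ (v = 2 ∧ u = 4) := by
  obtain ⟨hv, hu, hb⟩ := h
  fin_cases v <;> fin_cases u <;> simp_all [selfLoopNetwork]

lemma eq_one_of_transGen_self {v : Fin 5} (h : Relation.TransGen selfLoopNetwork.edgeRel v v) :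
    v = 1 := by
  obtain ⟨w, hvw, hwv⟩ := Relation.TransGen.head'_iff.1 h
  rcases edgeRel_cases hvw with rfl | ⟨rfl, rfl⟩
  · rfl
  · rcases hwv.cases_head with h42 | ⟨x, h4x, -⟩
    · exact absurd h42 (by decide)
    · rcases edgeRel_cases h4x with h | ⟨h, -⟩ <;> exact absurd h (by decide)

end selfLoopNetwork

/-- There exist an information network in which the only directed cycle of the
directed graph on `V \ {d}` is a self-loop at a single non-void node `v₀` (i.e. `v₀` has a
positive self-loop weight and every node lying on a directed cycle equals `v₀`), and a time
horizon `T ≥ 1`, such that the expected influence `A ↦ σ̄(A,∅)` over `[1,T]` is not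
submodular on subsets of `V \ {d}`. -/
theorem exists_selfloop_network_influence_not_submodular :
    ∃ (n : ℕ) (N : InfoNetwork (Fin n)) (T : ℕ), 1 ≤ T ∧
      (∃ v₀ : Fin n, v₀ ≠ N.d ∧ 0 < N.b v₀ v₀ ∧
        (∀ v : Fin n, Relation.TransGen N.edgeRel v v → v = v₀)) ∧
      ¬ SubmodularOn {x : Fin n | x ≠ N.d} (fun A => N.sigmaBar T A ∅) := by
  refine ⟨5, selfLoopNetwork, 2, one_le_two, ⟨1, by decide, by norm_num [selfLoopNetwork],
    fun _ => selfLoopNetwork.eq_one_of_transGen_self⟩, fun hsub => ?_⟩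
  have hB : ({1, 3} : Set (Fin 5)) ⊆ {x | x ≠ selfLoopNetwork.d} := by
    rintro x (rfl | rfl) <;> decide
  exact selfLoopNetwork.sigmaBar_gain_lt.not_ge
    (hsub {1} {1, 3} (by simp) hB 4 (by decide) (by decide))
end
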